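/- arXiv:math/0603053 — 2 statements merged into one kernel-verified Lean document; each statement's English description precedes it below -/
import Mathlib

section
/- Let k ≥ 2 be an integer and let σ be any permutation of {1, 2, …, k}. Then the set of positive integers n for which φ(n+σ(1)) > φ(n+σ(2)) > ⋯ > φ(n+σ(k)) has positive lower density. In particular, there exist infinitely many strings of k consecutive integers whose φ-values are arranged from largest to smallest in any prescribed manner. -/
/-!
Put `a_j = σ(j)`. For each `j` choose a finite set `S_j` of primes `> k`, the sets pairwise
disjoint, such that `ρ_j = φ(a_j)/a_j · ∏_{q ∈ S_j} (1 - 1/q)` lies in `[c_j, 2 c_j)` with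
`c_j = 1/(k 8^j)`: this is possible because `∑ 1/q` diverges while every factor is at least
`1/2`. If `y` bounds all these primes, the Chinese remainder theorem gives a class `r` modulo the
primorial of `y` on which the primes `≤ y` dividing `n + a_j` are exactly those dividing `a_j`
or lying in `S_j`. Then `φ(n + a_j)/(n + a_j)` is `ρ_j` times a factor in `[1 - W_j, 1]`, where
`W_j` is the sum of `1/p` over the prime factors `p > y` of `n + a_j`. Since `4 ρ_{j+1} < ρ_j`,
the prescribed order holds as soon as every `W_j ≤ 1/2`, and by double counting `W_j > 1/2` for
at most a proportion `4/(y+1) + o(1)` of the class, which is small once `y ≥ 16 k`.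
-/

open scoped Classical in
/-- The lower density of a set of positive integers:
`liminf_{x→∞} #{n ∈ S : n ≤ x} / x`. -/
noncomputable def lowerDensity (S : Set ℕ) : ℝ :=
  Filter.atTop.liminf fun x : ℕ =>
    (((Finset.Icc 1 x).filter (fun n => n ∈ S)).card : ℝ) / x

open Finset Filter Function

lemma one_sub_natCast_inv_mem_Icc (p : ℕ) : 1 - (p : ℝ)⁻¹ ∈ Set.Icc 0 1 :=
  ⟨sub_nonneg.2 (Nat.cast_inv_le_one p), sub_le_self _ (by positivity)⟩

lemma exists_subset_mul_prod_mem_Ico {ι : Type*} [DecidableEq ι] {f : ι → ℝ} {c : ℝ}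
    (hc : 0 < c) (F : Finset ι) (hf : ∀ i ∈ F, 1 / 2 ≤ f i) {u : ℝ} (hcu : c ≤ u)
    (hF : u * ∏ i ∈ F, f i < c) :
    ∃ S ⊆ F, c ≤ u * ∏ i ∈ S, f i ∧ u * ∏ i ∈ S, f i < 2 * c := by
  induction F using Finset.induction_on generalizing u with
  | empty => simp at hF; linarith
  | @insert i F hiF ih =>
    rw [prod_insert hiF, ← mul_assoc] at hF
    by_cases hci : c ≤ u * f i
    · obtain ⟨S, hSF, hS⟩ := ih (fun j hj => hf j (mem_insert_of_mem hj)) hci hF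
      refine ⟨insert i S, insert_subset_insert i hSF, ?_⟩
      rwa [prod_insert fun h => hiF (hSF h), ← mul_assoc]
    · refine ⟨∅, empty_subset _, by simpa using hcu, ?_⟩
      rw [prod_empty, mul_one]
      nlinarith [hf i (mem_insert_self i F)]

lemma exists_primes_gt_prod_one_sub_inv_lt (B : ℕ) {ε : ℝ} (hε : 0 < ε) :
    ∃ F : Finset ℕ, (∀ q ∈ F, q.Prime ∧ B < q) ∧
      ∏ q ∈ F, (1 - (q : ℝ)⁻¹) < ε := by
  obtain ⟨X, hX⟩ := (Real.tendsto_exp_neg_atTop_nhds_zero.eventually (gt_mem_nhds hε)).exists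
  set f : ℕ → ℝ := Set.indicator {p | p.Prime} fun n => 1 / n
  have hf : ∀ n, 0 ≤ f n := fun n => Set.indicator_nonneg (fun _ _ => by positivity) n
  have htail : Tendsto (fun N => ∑ i ∈ range N, f (i + (B + 1))) atTop atTop :=
    (not_summable_iff_tendsto_nat_atTop_of_nonneg fun n => hf _).1
      ((summable_nat_add_iff (B + 1)).not.2 not_summable_one_div_on_primes)
  obtain ⟨N, hN⟩ := (htail.eventually_ge_atTop X).exists
  refine ⟨{q ∈ Ico (B + 1) (N + (B + 1)) | q.Prime}, fun q hq => ?_, ?_⟩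
  · simp only [mem_filter, mem_Ico] at hq
    exact ⟨hq.2, hq.1.1⟩
  have hsum : ∑ q ∈ Ico (B + 1) (N + (B + 1)) with q.Prime, (q : ℝ)⁻¹ =
      ∑ i ∈ range N, f (i + (B + 1)) := by
    rw [sum_filter, sum_Ico_eq_sum_range, Nat.add_sub_cancel]
    refine sum_congr rfl fun i _ => ?_
    simp [f, Set.indicator_apply, add_comm]
  calc ∏ q ∈ Ico (B + 1) (N + (B + 1)) with q.Prime, (1 - (q : ℝ)⁻¹)
      ≤ ∏ q ∈ Ico (B + 1) (N + (B + 1)) with q.Prime, Real.exp (-(q : ℝ)⁻¹) :=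
        prod_le_prod (fun q _ => (one_sub_natCast_inv_mem_Icc q).1)
          fun q _ => Real.one_sub_le_exp_neg _
    _ = Real.exp (-X) * Real.exp (X - ∑ i ∈ range N, f (i + (B + 1))) := by
        rw [← Real.exp_sum, ← Real.exp_add, sum_neg_distrib, hsum]; congr 1; ring
    _ ≤ Real.exp (-X) * 1 := by gcongr; exact Real.exp_le_one_iff.2 (by linarith)
    _ < ε := by simpa using hX

lemma exists_primes_gt_mul_prod_mem_Ico (B : ℕ) {c u : ℝ} (hc : 0 < c) (hcu : c ≤ u) :
    ∃ S : Finset ℕ, (∀ q ∈ S, q.Prime ∧ B < q) ∧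
      c ≤ u * ∏ q ∈ S, (1 - (q : ℝ)⁻¹) ∧
      u * ∏ q ∈ S, (1 - (q : ℝ)⁻¹) < 2 * c := by
  have hu : 0 < u := hc.trans_le hcu
  obtain ⟨F, hFp, hF⟩ := exists_primes_gt_prod_one_sub_inv_lt B (div_pos hc hu)
  have half_le : ∀ q ∈ F, 1 / 2 ≤ 1 - (q : ℝ)⁻¹ := fun q hq => by
    have : (2 : ℝ) ≤ q := by exact_mod_cast (hFp q hq).1.two_le
    have : (q : ℝ)⁻¹ ≤ 1 / 2 := by rw [inv_eq_one_div]; gcongr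
    linarith
  obtain ⟨S, hSF, hS⟩ := exists_subset_mul_prod_mem_Ico hc F half_le hcu
    (by rwa [lt_div_iff₀' hu] at hF)
  exact ⟨S, fun q hq => hFp q (hSF hq), hS⟩

lemma exists_pairwiseDisjoint_of_forall_exists_gt {ι : Type*} [DecidableEq ι]
    (P : ι → Finset ℕ → Prop) (h : ∀ i B, ∃ T, (∀ q ∈ T, B < q) ∧ P i T) (B : ℕ)
    (s : Finset ι) :
    ∃ S : ι → Finset ℕ, (∀ i ∈ s, (∀ q ∈ S i, B < q) ∧ P i (S i)) ∧
      (s : Set ι).PairwiseDisjoint S := by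
  induction s using Finset.induction_on with
  | empty => exact ⟨fun _ => ∅, by simp, by simp⟩
  | @insert i s his ih =>
    obtain ⟨S, hS, hdisj⟩ := ih
    set B' := max B (s.sup fun j => (S j).sup id)
    obtain ⟨T, hT, hPT⟩ := h i B'
    have hS_le : ∀ j ∈ s, ∀ q ∈ S j, q ≤ B' := fun j hj q hq =>
      le_max_of_le_right (le_sup_of_le hj (le_sup (f := id) hq))
    refine ⟨update S i T, ?_, ?_⟩
    · intro j hj
      rcases mem_insert.1 hj with rfl | hj
      · simp only [update_self]
        exact ⟨fun q hq => (le_max_left _ _).trans_lt (hT q hq), hPT⟩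
      · rw [update_of_ne (ne_of_mem_of_not_mem hj his)]
        exact hS j hj
    · rw [coe_insert]
      refine Set.PairwiseDisjoint.insert (fun j hj l hl hjl => ?_) fun j hj hij => ?_
      · change Disjoint _ _
        rw [update_of_ne (ne_of_mem_of_not_mem hj his),
          update_of_ne (ne_of_mem_of_not_mem hl his)]
        exact hdisj hj hl hjl
      · rw [update_self, update_of_ne hij.symm]
        exact disjoint_left.2 fun q hqT hqS => (hT q hqT).not_ge (hS_le j hj q hqS)

lemma exists_pairwiseDisjoint_primes_gt_mul_prod_mem_Ico {ι : Type*} [Fintype ι]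
    [DecidableEq ι] (B : ℕ) {c u : ι → ℝ} (hc : ∀ i, 0 < c i) (hcu : ∀ i, c i ≤ u i) :
    ∃ S : ι → Finset ℕ, (∀ i, ∀ q ∈ S i, q.Prime ∧ B < q) ∧
      Pairwise (Disjoint on S) ∧ ∀ i, c i ≤ u i * ∏ q ∈ S i, (1 - (q : ℝ)⁻¹) ∧
        u i * ∏ q ∈ S i, (1 - (q : ℝ)⁻¹) < 2 * c i := by
  obtain ⟨S, hS, hS_disj⟩ := exists_pairwiseDisjoint_of_forall_exists_gt
    (fun i T => (∀ q ∈ T, q.Prime) ∧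
      c i ≤ u i * ∏ q ∈ T, (1 - (q : ℝ)⁻¹) ∧
      u i * ∏ q ∈ T, (1 - (q : ℝ)⁻¹) < 2 * c i)
    (fun i B => (exists_primes_gt_mul_prod_mem_Ico B (hc i) (hcu i)).imp fun T hT =>
      ⟨fun q hq => (hT.1 q hq).2, fun q hq => (hT.1 q hq).1, hT.2⟩) B univ
  exact ⟨S, fun i q hq => ⟨(hS i (mem_univ i)).2.1 q hq, (hS i (mem_univ i)).1 q hq⟩,
    fun i j hij => hS_disj (mem_coe.2 (mem_univ i)) (mem_coe.2 (mem_univ j)) hij,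
    fun i => (hS i (mem_univ i)).2.2⟩

noncomputable def invSumPrimeFactorsAbove (y N : ℕ) : ℝ :=
  ∑ p ∈ N.primeFactors with y < p, (p : ℝ)⁻¹

lemma one_sub_sum_le_prod_one_sub {ι : Type*} (s : Finset ι) {f : ι → ℝ}
    (h0 : ∀ i ∈ s, 0 ≤ f i) (h1 : ∀ i ∈ s, f i ≤ 1) :
    1 - ∑ i ∈ s, f i ≤ ∏ i ∈ s, (1 - f i) := by
  classical
  induction s using Finset.induction_on with
  | empty => simp
  | @insert i s his ih =>
    rw [sum_insert his, prod_insert his]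
    have hs := ih (fun j hj => h0 j (mem_insert_of_mem hj))
      fun j hj => h1 j (mem_insert_of_mem hj)
    have hs0 : 0 ≤ ∑ j ∈ s, f j := sum_nonneg fun j hj => h0 j (mem_insert_of_mem hj)
    nlinarith [mul_le_mul_of_nonneg_left hs (sub_nonneg.2 (h1 i (mem_insert_self i s))),
      h0 i (mem_insert_self i s)]

lemma totient_eq_mul_prod_one_sub_inv (n : ℕ) :
    (n.totient : ℝ) = n * ∏ p ∈ n.primeFactors, (1 - (p : ℝ)⁻¹) := by
  simpa using congrArg (Rat.cast : ℚ → ℝ) (Nat.totient_eq_mul_prod_factors n)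

lemma inv_le_prod_primeFactors_one_sub_inv {n : ℕ} (hn : n ≠ 0) :
    (n : ℝ)⁻¹ ≤ ∏ p ∈ n.primeFactors, (1 - (p : ℝ)⁻¹) := by
  have hφ : (1 : ℝ) ≤ n.totient := by exact_mod_cast Nat.totient_pos.2 (Nat.pos_of_ne_zero hn)
  rw [totient_eq_mul_prod_one_sub_inv] at hφ
  rwa [inv_le_iff_one_le_mul₀' (by exact_mod_cast Nat.pos_of_ne_zero hn)]

lemma totient_mem_Icc_of_filter_primeFactors_eq {N y : ℕ} {P : Finset ℕ}
    (hP : {p ∈ N.primeFactors | p ≤ y} = P) :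
    (N.totient : ℝ) ∈ Set.Icc
      (N * (∏ p ∈ P, (1 - (p : ℝ)⁻¹)) * (1 - invSumPrimeFactorsAbove y N))
      (N * ∏ p ∈ P, (1 - (p : ℝ)⁻¹)) := by
  have hsplit : (N.totient : ℝ) = N * (∏ p ∈ P, (1 - (p : ℝ)⁻¹)) *
      ∏ p ∈ N.primeFactors with y < p, (1 - (p : ℝ)⁻¹) := by
    rw [totient_eq_mul_prod_one_sub_inv, ← hP, mul_assoc, ← prod_filter_mul_prod_filter_not
      N.primeFactors (· ≤ y)]
    simp only [not_le]
  have hρ : 0 ≤ (N : ℝ) * ∏ p ∈ P, (1 - (p : ℝ)⁻¹) :=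
    mul_nonneg (Nat.cast_nonneg N) (prod_nonneg fun p _ => (one_sub_natCast_inv_mem_Icc p).1)
  rw [hsplit]
  constructor
  · exact mul_le_mul_of_nonneg_left (one_sub_sum_le_prod_one_sub _ (fun p _ => by positivity)
      fun p _ => Nat.cast_inv_le_one p) hρ
  · exact mul_le_of_le_one_right hρ (prod_le_one (fun p _ => (one_sub_natCast_inv_mem_Icc p).1)
      fun p _ => (one_sub_natCast_inv_mem_Icc p).2)

lemma totient_lt_totient_of_filter_primeFactors_eq {N₁ N₂ y : ℕ} {P₁ P₂ : Finset ℕ}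
    (h₁ : {p ∈ N₁.primeFactors | p ≤ y} = P₁)
    (h₂ : {p ∈ N₂.primeFactors | p ≤ y} = P₂)
    (hW : invSumPrimeFactorsAbove y N₁ ≤ 1 / 2)
    (hρ : 4 * ∏ p ∈ P₂, (1 - (p : ℝ)⁻¹) < ∏ p ∈ P₁, (1 - (p : ℝ)⁻¹))
    (hN : N₂ ≤ 2 * N₁) (hN₁ : 0 < N₁) :
    N₂.totient < N₁.totient := by
  set ρ₁ := ∏ p ∈ P₁, (1 - (p : ℝ)⁻¹)
  set ρ₂ := ∏ p ∈ P₂, (1 - (p : ℝ)⁻¹)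
  have hρ₂ : 0 ≤ ρ₂ := prod_nonneg fun p _ => (one_sub_natCast_inv_mem_Icc p).1
  have hN' : (N₂ : ℝ) ≤ 2 * N₁ := by exact_mod_cast hN
  have hN₁' : (0 : ℝ) < N₁ := by exact_mod_cast hN₁
  have hhalf :
      (N₁ : ℝ) * ρ₁ / 2 ≤ N₁ * ρ₁ * (1 - invSumPrimeFactorsAbove y N₁) := by
    nlinarith [mul_pos hN₁' (by linarith : 0 < ρ₁)]
  have key : (N₂.totient : ℝ) < N₁.totient :=
    calc (N₂.totient : ℝ) ≤ N₂ * ρ₂ := (totient_mem_Icc_of_filter_primeFactors_eq h₂).2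
      _ ≤ 2 * N₁ * ρ₂ := by gcongr
      _ < N₁ * ρ₁ / 2 := by nlinarith
      _ ≤ N₁.totient := hhalf.trans (totient_mem_Icc_of_filter_primeFactors_eq h₁).1
  exact_mod_cast key

lemma exists_not_dvd_add {ι : Type*} [Fintype ι] (a : ι → ℕ) {p : ℕ}
    (hp : Fintype.card ι < p) :
    ∃ β, ∀ j, ¬ p ∣ β + a j := by
  have : NeZero p := ⟨by omega⟩
  obtain ⟨b, -, hb⟩ := exists_mem_notMem_of_card_lt_card
    (s := univ.image fun j => -(a j : ZMod p)) (t := univ)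
    (by rw [card_univ, ZMod.card]; exact card_image_le.trans_lt (by simpa using hp))
  refine ⟨b.val, fun j hj => hb (mem_image.2 ⟨j, mem_univ _, ?_⟩)⟩
  rw [← ZMod.natCast_eq_zero_iff, Nat.cast_add, ZMod.natCast_zmod_val] at hj
  exact (eq_neg_of_add_eq_zero_left hj).symm

section Shifts

variable {k : ℕ} {a : Fin k → ℕ} {S : Fin k → Finset ℕ}

lemma exists_prime_sets_four_mul_prod_lt (ha : ∀ j, a j ∈ Icc 1 k) :
    ∃ S : Fin k → Finset ℕ, (∀ j, ∀ q ∈ S j, q.Prime ∧ k < q) ∧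
      Pairwise (Disjoint on S) ∧
      ∀ i j, i < j → 4 * ∏ p ∈ (a j).primeFactors ∪ S j, (1 - (p : ℝ)⁻¹) <
        ∏ p ∈ (a i).primeFactors ∪ S i, (1 - (p : ℝ)⁻¹) := by
  set u : Fin k → ℝ := fun j => ∏ p ∈ (a j).primeFactors, (1 - (p : ℝ)⁻¹)
  set c : Fin k → ℝ := fun j => 1 / (k * 8 ^ (j : ℕ))
  have hk : ∀ j : Fin k, (0 : ℝ) < k := fun j => by exact_mod_cast j.pos
  have hcu : ∀ j, c j ≤ u j := fun j => by
    have haj := mem_Icc.1 (ha j)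
    refine le_trans ?_ (inv_le_prod_primeFactors_one_sub_inv (by omega : a j ≠ 0))
    rw [← one_div]
    refine one_div_le_one_div_of_le (by exact_mod_cast haj.1) ?_
    calc ((a j : ℕ) : ℝ) ≤ k := by exact_mod_cast haj.2
      _ ≤ k * 8 ^ (j : ℕ) := le_mul_of_one_le_right (hk j).le (one_le_pow₀ (by norm_num))
  obtain ⟨S, hS, hS_disj, hS_win⟩ := exists_pairwiseDisjoint_primes_gt_mul_prod_mem_Ico k
    (fun j => by have := hk j; positivity) hcu
  have hprod : ∀ j, ∏ p ∈ (a j).primeFactors ∪ S j, (1 - (p : ℝ)⁻¹) =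
      u j * ∏ q ∈ S j, (1 - (q : ℝ)⁻¹) := fun j => by
    refine prod_union (disjoint_left.2 fun p hpa hpS => ?_)
    have := Nat.le_of_mem_primeFactors hpa
    have := (hS j p hpS).2
    have := mem_Icc.1 (ha j)
    omega
  refine ⟨S, hS, hS_disj, fun i j hij => ?_⟩
  have hc8 : 8 * c j ≤ c i := by
    have := hk i
    have h8 : (8 : ℝ) ^ (i : ℕ) * 8 ≤ 8 ^ (j : ℕ) :=
      pow_succ (8 : ℝ) i ▸ pow_le_pow_right₀ (by norm_num) hij
    simp only [c]
    rw [mul_one_div, div_le_div_iff₀ (by positivity) (by positivity)]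
    nlinarith [mul_le_mul_of_nonneg_left h8 (hk i).le]
  rw [hprod, hprod]
  linarith [(hS_win i).1, (hS_win j).2]

lemma exists_dvd_add_iff (p : ℕ) (ha : ∀ j, a j ∈ Icc 1 k)
    (ha_inj : Injective a) (hS : ∀ j, ∀ q ∈ S j, k < q)
    (hS_disj : Pairwise (Disjoint on S)) :
    ∃ β, ∀ j, p ∣ β + a j ↔ p ∣ a j ∨ p ∈ S j := by
  by_cases hpk : p ≤ k
  · refine ⟨0, fun j => ?_⟩
    have : p ∉ S j := fun h => (hS j p h).not_ge hpk
    simp [this]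
  push Not at hpk
  have ha_lt : ∀ j, 0 < a j ∧ a j < p := fun j => by have := mem_Icc.1 (ha j); omega
  have hndvd : ∀ j, ¬ p ∣ a j := fun j h => (Nat.le_of_dvd (ha_lt j).1 h).not_gt (ha_lt j).2
  by_cases hpS : ∃ j₀, p ∈ S j₀
  · obtain ⟨j₀, hj₀⟩ := hpS
    refine ⟨p - a j₀, fun j => ?_⟩
    simp only [hndvd j, false_or]
    constructor
    · intro h
      have := ha_lt j
      have := ha_lt j₀
      have := Nat.eq_of_dvd_of_lt_two_mul (by omega) h (by omega)
      rwa [ha_inj (by omega : a j = a j₀)]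
    · intro h
      obtain rfl : j = j₀ := by_contra fun hne => disjoint_left.1 (hS_disj hne) h hj₀
      rw [Nat.sub_add_cancel (ha_lt j).2.le]
  · obtain ⟨β, hβ⟩ := exists_not_dvd_add a (by simpa using hpk)
    exact ⟨β, fun j => by simp [hβ j, hndvd j, not_exists.1 hpS j]⟩

lemma exists_modEq_primorial_filter_primeFactors_eq {y : ℕ} (ha : ∀ j, a j ∈ Icc 1 k)
    (ha_inj : Injective a) (hS : ∀ j, ∀ q ∈ S j, q.Prime ∧ k < q)
    (hS_disj : Pairwise (Disjoint on S)) (hSy : ∀ j, ∀ q ∈ S j, q ≤ y) (hky : k ≤ y) :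
    ∃ r, ∀ n, n ≡ r [MOD primorial y] →
      ∀ j, {p ∈ (n + a j).primeFactors | p ≤ y} = (a j).primeFactors ∪ S j := by
  choose β hβ using fun p =>
    exists_dvd_add_iff p ha ha_inj (fun j q hq => (hS j q hq).2) hS_disj
  obtain ⟨r, hr⟩ := Nat.chineseRemainderOfFinset β id y.primesLE
    (fun p hp => (Nat.mem_primesLE.1 hp).2.ne_zero)
    fun p hp q hq hpq => (Nat.coprime_primes (Nat.mem_primesLE.1 hp).2
      (Nat.mem_primesLE.1 hq).2).2 hpq
  refine ⟨r, fun n hn j => ?_⟩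
  have hdvd_iff : ∀ p, p.Prime → p ≤ y → (p ∣ n + a j ↔ p ∣ a j ∨ p ∈ S j) := by
    intro p hp hpy
    have hnβ : n ≡ β p [MOD p] := (Nat.ModEq.of_dvd (hp.dvd_primorial_iff.2 hpy) hn).trans
      (hr p (Nat.mem_primesLE.2 ⟨hpy, hp⟩))
    rw [(hnβ.add_right (a j)).dvd_iff dvd_rfl, hβ p j]
  have ha0 : a j ≠ 0 := by have := mem_Icc.1 (ha j); omega
  ext p
  simp only [mem_filter, mem_union, Nat.mem_primeFactors]
  constructor
  · rintro ⟨⟨hp, hdvd, -⟩, hpy⟩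
    rcases (hdvd_iff p hp hpy).1 hdvd with h | h
    exacts [Or.inl ⟨hp, h, ha0⟩, Or.inr h]
  · rintro (⟨hp, hdvd, -⟩ | h)
    · have hpy : p ≤ y := (Nat.le_of_dvd (Nat.pos_of_ne_zero ha0) hdvd).trans
        ((mem_Icc.1 (ha j)).2.trans hky)
      exact ⟨⟨hp, (hdvd_iff p hp hpy).2 (Or.inl hdvd), by omega⟩, hpy⟩
    · have hp := (hS j p h).1
      exact ⟨⟨hp, (hdvd_iff p hp (hSy j p h)).2 (Or.inr h), by omega⟩, hSy j p h⟩

end Shifts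

lemma card_filter_range_modEq_le (x : ℕ) {d : ℕ} (hd : 0 < d) (v : ℕ) :
    #{n ∈ range x | n ≡ v [MOD d]} ≤ x / d + 1 := by
  rw [← Nat.count_eq_card_filter_range, Nat.count_modEq_card x hd]
  split_ifs <;> omega

lemma div_le_card_filter_range_modEq (x : ℕ) {d : ℕ} (hd : 0 < d) (v : ℕ) :
    x / d ≤ #{n ∈ range x | n ≡ v [MOD d]} := by
  rw [← Nat.count_eq_card_filter_range, Nat.count_modEq_card x hd]
  omega

lemma card_filter_modEq_dvd_add_le (x a : ℕ) {M p : ℕ} (hM : 0 < M) (hp : 0 < p)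
    (hMp : M.Coprime p) (r : ℕ) :
    #{n ∈ range x | n ≡ r [MOD M] ∧ p ∣ n + a} ≤ x / (M * p) + 1 := by
  obtain h | ⟨n₁, hn₁⟩ :=
    eq_empty_or_nonempty {n ∈ range x | n ≡ r [MOD M] ∧ p ∣ n + a}
  · simp [h]
  refine (card_le_card fun n hn => ?_).trans (card_filter_range_modEq_le x (by positivity) n₁)
  simp only [mem_filter] at hn hn₁ ⊢
  refine ⟨hn.1, (Nat.modEq_and_modEq_iff_modEq_mul hMp).1 ⟨hn.2.1.trans hn₁.2.1.symm, ?_⟩⟩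
  exact Nat.ModEq.add_right_cancel' a
    ((Nat.modEq_zero_iff_dvd.2 hn.2.2).trans (Nat.modEq_zero_iff_dvd.2 hn₁.2.2).symm)

lemma card_filter_lt_mul_le_sum {ι : Type*} (A : Finset ι) {f : ι → ℝ}
    (hf : ∀ i ∈ A, 0 ≤ f i) (t : ℝ) :
    #{i ∈ A | t < f i} * t ≤ ∑ i ∈ A, f i := by
  calc #{i ∈ A | t < f i} * t = ∑ i ∈ A with t < f i, t := by rw [sum_const, nsmul_eq_mul]
    _ ≤ ∑ i ∈ A with t < f i, f i := sum_le_sum fun i hi => (mem_filter.1 hi).2.le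
    _ ≤ ∑ i ∈ A, f i :=
        sum_le_sum_of_subset_of_nonneg (filter_subset _ _) fun i hi _ => hf i hi

lemma sum_inv_le_one_add_log {T : Finset ℕ} {N : ℕ} (hT : T ⊆ Icc 1 N) :
    ∑ p ∈ T, (p : ℝ)⁻¹ ≤ 1 + Real.log N :=
  calc ∑ p ∈ T, (p : ℝ)⁻¹ ≤ ∑ i ∈ Icc 1 N, (i : ℝ)⁻¹ :=
        sum_le_sum_of_subset_of_nonneg hT fun _ _ _ => by positivity
    _ = harmonic N := by rw [harmonic_eq_sum_Icc]; push_cast; rfl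
    _ ≤ 1 + Real.log N := harmonic_le_one_add_log N

lemma sum_invSumPrimeFactorsAbove_eq (A : Finset ℕ) {x a : ℕ} (hA : ∀ n ∈ A, n < x)
    (ha : 0 < a) (y : ℕ) :
    ∑ n ∈ A, invSumPrimeFactorsAbove y (n + a) =
      ∑ p ∈ Ioo y (x + a) with p.Prime, (#{n ∈ A | p ∣ n + a} : ℝ) * (p : ℝ)⁻¹ := by
  unfold invSumPrimeFactorsAbove
  rw [sum_comm' (t' := {p ∈ Ioo y (x + a) | p.Prime}) (s' := fun p => {n ∈ A | p ∣ n + a})]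
  · simp only [sum_const, nsmul_eq_mul]
  · intro n p
    simp only [mem_filter, Nat.mem_primeFactors, mem_Ioo]
    constructor
    · rintro ⟨hn, ⟨hp, hdvd, hne⟩, hyp⟩
      have := Nat.le_of_dvd (Nat.pos_of_ne_zero hne) hdvd
      have := hA n hn
      exact ⟨⟨hn, hdvd⟩, ⟨hyp, by omega⟩, hp⟩
    · rintro ⟨⟨hn, hdvd⟩, ⟨hyp, -⟩, hp⟩
      exact ⟨hn, ⟨hp, hdvd, by omega⟩, hyp⟩

lemma eventually_one_add_log_add_le (a : ℕ) {ε : ℝ} (hε : 0 < ε) :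
    ∀ᶠ x : ℕ in atTop, 1 + Real.log (x + a) ≤ ε * x := by
  have hlog : (fun x : ℝ => Real.log (x + a)) =o[atTop] id :=
    (Real.isLittleO_log_id_atTop.comp_tendsto
      (tendsto_atTop_add_const_right _ _ tendsto_id)).trans_isBigO
        ((Asymptotics.isBigO_refl _ _).add (Asymptotics.isLittleO_const_id_atTop _).isBigO)
  filter_upwards [((Asymptotics.isLittleO_const_id_atTop 1).add hlog).comp_tendsto
    tendsto_natCast_atTop_atTop |>.def hε] with x hx
  simpa using (le_abs_self _).trans hx

section Counting

variable {M y : ℕ} (hM : 0 < M) (hMy : ∀ p, p.Prime → y < p → M.Coprime p)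
include hM hMy

lemma sum_filter_modEq_invSumPrimeFactorsAbove_le (x : ℕ) {a : ℕ} (ha : 0 < a) (r : ℕ) :
    ∑ n ∈ range x with n ≡ r [MOD M], invSumPrimeFactorsAbove y (n + a) ≤
      x / M * (2 / (y + 1)) + (1 + Real.log (x + a)) := by
  rw [sum_invSumPrimeFactorsAbove_eq _ (fun n hn => mem_range.1 (mem_filter.1 hn).1) ha]
  set T := {p ∈ Ioo y (x + a) | p.Prime}
  have hT : ∀ p ∈ T, p.Prime ∧ y < p := fun p hp => by
    simp only [T, mem_filter, mem_Ioo] at hp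
    exact ⟨hp.2, hp.1.1⟩
  have hcount : ∀ p ∈ T,
      (#{n ∈ {n ∈ range x | n ≡ r [MOD M]} | p ∣ n + a} : ℝ) ≤ x / (M * p) + 1 := by
    intro p hp
    rw [filter_filter]
    have := card_filter_modEq_dvd_add_le x a hM (hT p hp).1.pos
      (hMy p (hT p hp).1 (hT p hp).2) r
    calc (_ : ℝ) ≤ ((x / (M * p) : ℕ) : ℝ) + 1 := by exact_mod_cast this
      _ ≤ x / (M * p) + 1 := by gcongr; exact_mod_cast Nat.cast_div_le
  calc _ ≤ ∑ p ∈ T, ((x : ℝ) / (M * p) + 1) * (p : ℝ)⁻¹ :=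
        sum_le_sum fun p hp => mul_le_mul_of_nonneg_right (hcount p hp) (by positivity)
    _ = x / M * ∑ p ∈ T, ((p : ℝ) ^ 2)⁻¹ + ∑ p ∈ T, (p : ℝ)⁻¹ := by
        rw [mul_sum, ← sum_add_distrib]
        refine sum_congr rfl fun p hp => ?_
        have : (p : ℝ) ≠ 0 := by exact_mod_cast (hT p hp).1.ne_zero
        field_simp
    _ ≤ x / M * (2 / (y + 1)) + (1 + Real.log (x + a)) := by
        gcongr
        · exact (sum_le_sum_of_subset_of_nonneg (filter_subset _ _)
            fun _ _ _ => by positivity).trans (sum_Ioo_inv_sq_le y (x + a))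
        · exact_mod_cast sum_inv_le_one_add_log fun p hp => by
            have := hT p hp
            simp only [T, mem_filter, mem_Ioo, mem_Icc] at hp ⊢
            omega

lemma card_filter_modEq_invSumPrimeFactorsAbove_gt_le (x : ℕ) {a : ℕ} (ha : 0 < a) (r : ℕ) :
    (#{n ∈ range x | n ≡ r [MOD M] ∧ 1 / 2 < invSumPrimeFactorsAbove y (n + a)} : ℝ) ≤
      2 * (x / M * (2 / (y + 1)) + (1 + Real.log (x + a))) := by
  have := card_filter_lt_mul_le_sum {n ∈ range x | n ≡ r [MOD M]}
    (f := fun n => invSumPrimeFactorsAbove y (n + a))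
    (fun _ _ => sum_nonneg fun _ _ => by positivity) (1 / 2)
  rw [filter_filter] at this
  linarith [sum_filter_modEq_invSumPrimeFactorsAbove_le hM hMy x ha r]

lemma eventually_card_filter_modEq_invSumPrimeFactorsAbove_gt_le {a : ℕ} (ha : 0 < a) (r : ℕ)
    {ε : ℝ} (hε : 0 < ε) :
    ∀ᶠ x : ℕ in atTop,
      (#{n ∈ range x | n ≡ r [MOD M] ∧ 1 / 2 < invSumPrimeFactorsAbove y (n + a)} : ℝ) ≤
        x / M * (4 / (y + 1)) + ε * x := by
  filter_upwards [eventually_one_add_log_add_le a (half_pos hε)] with x hx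
  have := card_filter_modEq_invSumPrimeFactorsAbove_gt_le hM hMy x ha r
  linarith [show (x : ℝ) / M * (4 / (y + 1)) = 2 * (x / M * (2 / (y + 1))) by ring]

end Counting

section Density

variable {ι : Type*} [Fintype ι] (a : ι → ℕ)

lemma card_filter_modEq_le_card_add_sum_card (x M y r n₀ : ℕ) :
    #{n ∈ range x | n ≡ r [MOD M]} ≤
      #{n ∈ range x | n ≡ r [MOD M] ∧ n₀ < n ∧
        ∀ j, invSumPrimeFactorsAbove y (n + a j) ≤ 1 / 2} + (n₀ + 1) +
      ∑ j, #{n ∈ range x | n ≡ r [MOD M] ∧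
        1 / 2 < invSumPrimeFactorsAbove y (n + a j)} := by
  classical
  set G := {n ∈ range x | n ≡ r [MOD M] ∧ n₀ < n ∧
    ∀ j, invSumPrimeFactorsAbove y (n + a j) ≤ 1 / 2}
  set Bad := fun j =>
    {n ∈ range x | n ≡ r [MOD M] ∧ 1 / 2 < invSumPrimeFactorsAbove y (n + a j)}
  have hcover :
      {n ∈ range x | n ≡ r [MOD M]} ⊆ G ∪ range (n₀ + 1) ∪ univ.biUnion Bad := by
    intro n hn
    simp only [mem_filter, mem_range] at hn
    simp only [G, Bad, mem_union, mem_filter, mem_range, mem_biUnion, mem_univ, true_and]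
    by_cases hn₀ : n₀ < n
    · by_cases hW : ∀ j, invSumPrimeFactorsAbove y (n + a j) ≤ 1 / 2
      · exact Or.inl (Or.inl ⟨hn.1, hn.2, hn₀, hW⟩)
      · push Not at hW
        obtain ⟨j, hj⟩ := hW
        exact Or.inr ⟨j, hn.1, hn.2, hj⟩
    · exact Or.inl (Or.inr (by omega))
  calc _ ≤ #(G ∪ range (n₀ + 1) ∪ univ.biUnion Bad) := card_le_card hcover
    _ ≤ #G + #(range (n₀ + 1)) + #(univ.biUnion Bad) :=
        (card_union_le _ _).trans (Nat.add_le_add_right (card_union_le _ _) _)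
    _ ≤ _ := by rw [card_range]; exact Nat.add_le_add_left card_biUnion_le _

lemma eventually_div_le_card_filter_invSumPrimeFactorsAbove_le (ha : ∀ j, 0 < a j) {M y : ℕ}
    (hM : 0 < M) (hMy : ∀ p, p.Prime → y < p → M.Coprime p) (hy : 16 * Fintype.card ι ≤ y)
    (r n₀ : ℕ) :
    ∀ᶠ x : ℕ in atTop, (x : ℝ) / (2 * M) ≤
      #{n ∈ range x | n ≡ r [MOD M] ∧ n₀ < n ∧
        ∀ j, invSumPrimeFactorsAbove y (n + a j) ≤ 1 / 2} := by
  set K := Fintype.card ι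
  have hM' : (0 : ℝ) < M := by exact_mod_cast hM
  set ε : ℝ := 1 / (8 * M * (K + 1))
  have hK₁ : (K : ℝ) * (4 / (y + 1)) ≤ 1 / 4 := by
    have : (16 * K : ℝ) ≤ y := by exact_mod_cast hy
    rw [mul_div_assoc', div_le_div_iff₀ (by positivity) (by norm_num)]
    linarith
  have hK₂ : (K : ℝ) * ε ≤ 1 / (8 * M) := by
    rw [mul_one_div, div_le_div_iff₀ (by positivity) (by positivity)]
    nlinarith
  filter_upwards [eventually_all.2 fun j =>
      eventually_card_filter_modEq_invSumPrimeFactorsAbove_gt_le hM hMy (ha j) r (ε := ε)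
        (by positivity),
    eventually_ge_atTop (8 * M * (n₀ + 2))] with x hbad hx
  have hA : (x : ℝ) / M - 1 ≤ #{n ∈ range x | n ≡ r [MOD M]} := by
    refine (Nat.sub_one_lt_floor ((x : ℝ) / M)).le.trans ?_
    rw [Nat.floor_div_eq_div]
    exact_mod_cast div_le_card_filter_range_modEq x hM r
  have hcover := (Nat.cast_le (α := ℝ)).2 (card_filter_modEq_le_card_add_sum_card a x M y r n₀)
  push_cast at hcover
  have hsum := sum_le_sum fun j (_ : j ∈ univ) => hbad j
  rw [sum_const, card_univ, nsmul_eq_mul] at hsum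
  have hx' : 8 * (n₀ + 2) ≤ (x : ℝ) / M := by
    rw [le_div_iff₀ hM']; exact_mod_cast (by linarith : 8 * (n₀ + 2) * M ≤ x)
  have hKx : (K : ℝ) * (x / M * (4 / (y + 1)) + ε * x) ≤
      x / M * (1 / 4) + x * (1 / (8 * M)) := by
    have := mul_le_mul_of_nonneg_left hK₁ (by positivity : (0 : ℝ) ≤ x / M)
    have := mul_le_mul_of_nonneg_left hK₂ (Nat.cast_nonneg (α := ℝ) x)
    linarith
  have : (x : ℝ) * (1 / (8 * M)) = x / M / 8 := by ring
  have : (x : ℝ) / (2 * M) = x / M / 2 := by ring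
  linarith

end Density

lemma Nat.Prime.coprime_primorial_of_lt {p y : ℕ} (hp : p.Prime) (hyp : y < p) :
    (primorial y).Coprime p :=
  (hp.coprime_iff_not_dvd.2 fun h => hyp.not_ge (hp.dvd_primorial_iff.1 h)).symm

open scoped Classical in
lemma lowerDensity_pos_of_eventually_le_card {S : Set ℕ} {δ : ℝ} (hδ : 0 < δ)
    (h : ∀ᶠ x : ℕ in atTop, δ * x ≤ #{n ∈ Icc 1 x | n ∈ S}) : 0 < lowerDensity S := by
  refine hδ.trans_le (le_liminf_of_le ?_ ?_)
  · refine (isBoundedUnder_of ⟨1, fun x => ?_⟩).isCoboundedUnder_ge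
    exact div_le_one_of_le₀ (by exact_mod_cast (card_filter_le _ _).trans (by simp))
      (Nat.cast_nonneg x)
  · filter_upwards [h, eventually_gt_atTop 0] with x hx hx0
    rwa [le_div_iff₀ (by exact_mod_cast hx0)]

theorem totient_consecutive_prescribed_order_general
    (k : ℕ) (e : Equiv.Perm (Fin k)) :
    0 < lowerDensity {n : ℕ | 0 < n ∧
      ∀ i : ℕ, ∀ h : i + 1 < k,
        Nat.totient (n + (e ⟨i, Nat.lt_of_succ_lt h⟩ : Fin k).val + 1) >
          Nat.totient (n + (e ⟨i + 1, h⟩ : Fin k).val + 1)} := by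
  set a : Fin k → ℕ := fun j => e j + 1
  have ha : ∀ j, a j ∈ Icc 1 k := fun j => mem_Icc.2 ⟨Nat.succ_pos _, (e j).isLt⟩
  have ha_inj : Injective a := fun i j h => e.injective (Fin.ext (by simpa [a] using h))
  obtain ⟨S, hS, hS_disj, hρ⟩ := exists_prime_sets_four_mul_prod_lt ha
  set y := max (16 * k) (univ.sup fun j => (S j).sup id)
  have hSy : ∀ j, ∀ q ∈ S j, q ≤ y := fun j q hq =>
    le_max_of_le_right (le_sup_of_le (mem_univ j) (le_sup (f := id) hq))
  obtain ⟨r, hr⟩ :=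
    exists_modEq_primorial_filter_primeFactors_eq ha ha_inj hS hS_disj hSy (by omega)
  refine lowerDensity_pos_of_eventually_le_card (δ := 1 / (2 * primorial y))
    (by have := primorial_pos y; positivity) ?_
  filter_upwards [eventually_div_le_card_filter_invSumPrimeFactorsAbove_le a
    (fun j => (mem_Icc.1 (ha j)).1) (primorial_pos y) (fun _ hp => hp.coprime_primorial_of_lt)
    (by rw [Fintype.card_fin]; exact le_max_left _ _) r k] with x hx
  refine (le_of_eq_of_le (by ring) hx).trans (Nat.cast_le.2 (card_le_card fun n hn => ?_))
  simp only [mem_filter, mem_range, mem_Icc] at hn ⊢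
  obtain ⟨hnx, hnr, hkn, hW⟩ := hn
  refine ⟨⟨by omega, hnx.le⟩, by omega, fun i h => ?_⟩
  have := (e ⟨i, Nat.lt_of_succ_lt h⟩).isLt
  exact totient_lt_totient_of_filter_primeFactors_eq (hr n hnr _) (hr n hnr _) (hW _)
    (hρ _ _ (Fin.mk_lt_mk.2 (Nat.lt_succ_self i))) (by omega) (by omega)

theorem totient_consecutive_prescribed_order
    (k : ℕ) (hk : 2 ≤ k) (e : Equiv.Perm (Fin k)) :
    0 < lowerDensity {n : ℕ | 0 < n ∧
      ∀ i : ℕ, ∀ h : i + 1 < k,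
        Nat.totient (n + (e ⟨i, Nat.lt_of_succ_lt h⟩ : Fin k).val + 1) >
          Nat.totient (n + (e ⟨i + 1, h⟩ : Fin k).val + 1)} :=
  totient_consecutive_prescribed_order_general k e
end

section
/- Let k be a positive integer, and let c₁, …, c_k, d₁, …, d_k be positive integers with c_j and d_j relatively prime for each 1 ≤ j ≤ k. Then the set of positive integers m for which the inequalities φ(c₁m+d₁)/(c₁m+d₁) > e^{-k}, φ(c₂m+d₂)/(c₂m+d₂) > e^{-k}, …, φ(c_km+d_k)/(c_km+d_k) > e^{-k} are all satisfied has lower density at least 3/10. -/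
open Finset Filter Real

noncomputable def primeWeight (p : ℕ) : ℝ := if p = 2 then log 2 else 1 / ((p : ℝ) - 1)

noncomputable def primeFactorWeight (n : ℕ) : ℝ := ∑ p ∈ n.primeFactors, primeWeight p

lemma primeWeight_nonneg {p : ℕ} (hp : 2 ≤ p) : 0 ≤ primeWeight p := by
  have : (2 : ℝ) ≤ p := by exact_mod_cast hp
  unfold primeWeight
  split_ifs
  · positivity
  · exact one_div_nonneg.mpr (by linarith)

lemma primeFactorWeight_nonneg (n : ℕ) : 0 ≤ primeFactorWeight n :=
  sum_nonneg fun _ hp => primeWeight_nonneg (Nat.prime_of_mem_primeFactors hp).two_le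

lemma primeWeight_le_two_div {p : ℕ} (hp : 2 ≤ p) : primeWeight p ≤ 2 / p := by
  have : (2 : ℝ) ≤ p := by exact_mod_cast hp
  unfold primeWeight
  split_ifs with h2
  · subst h2
    norm_num
    linarith [log_two_lt_d9]
  · rw [div_le_div_iff₀ (by linarith) (by linarith)]
    linarith

lemma exp_neg_primeWeight_le {p : ℕ} (hp : 2 ≤ p) :
    exp (-primeWeight p) ≤ 1 - (p : ℝ)⁻¹ := by
  have : (2 : ℝ) ≤ p := by exact_mod_cast hp
  unfold primeWeight
  split_ifs with h2
  · subst h2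
    rw [exp_neg, exp_log two_pos]
    norm_num
  · have hp1 : (0 : ℝ) < p - 1 := by linarith
    -- `1 - p⁻¹ = (1 + t)⁻¹` with `t = 1 / (p - 1)`, and `1 + t ≤ exp t`
    have hinv : 1 - (p : ℝ)⁻¹ = (1 + 1 / ((p : ℝ) - 1))⁻¹ := by
      field_simp
      ring
    rw [hinv, exp_neg]
    exact inv_anti₀ (by positivity) (by linarith [add_one_le_exp (1 / ((p : ℝ) - 1))])

lemma totient_div_eq_prod {n : ℕ} (hn : n ≠ 0) :
    (n.totient : ℝ) / n = ∏ p ∈ n.primeFactors, (1 - (p : ℝ)⁻¹) := by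
  have h := congrArg (Rat.cast : ℚ → ℝ) (Nat.totient_eq_mul_prod_factors n)
  push_cast at h
  rw [h, mul_div_cancel_left₀ _ (by exact_mod_cast hn)]

lemma exp_neg_primeFactorWeight_le_totient_div {n : ℕ} (hn : n ≠ 0) :
    exp (-primeFactorWeight n) ≤ (n.totient : ℝ) / n := by
  rw [totient_div_eq_prod hn, primeFactorWeight, ← sum_neg_distrib, exp_sum]
  exact prod_le_prod (fun _ _ => (exp_pos _).le)
    fun p hp => exp_neg_primeWeight_le (Nat.prime_of_mem_primeFactors hp).two_le

lemma exp_neg_lt_totient_div_of_primeFactorWeight_lt {n : ℕ} (hn : n ≠ 0) {K : ℝ}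
    (h : primeFactorWeight n < K) : exp (-K) < (n.totient : ℝ) / n :=
  (exp_lt_exp.mpr (neg_lt_neg h)).trans_le (exp_neg_primeFactorWeight_le_totient_div hn)

lemma sum_primesBelow_inv_le (N : ℕ) : ∑ p ∈ N.primesBelow, (p : ℝ)⁻¹ ≤ 1 + log N := by
  have hsub : N.primesBelow ⊆ Icc 1 N := fun p hp => by
    rw [Nat.mem_primesBelow] at hp
    exact mem_Icc.mpr ⟨hp.2.one_le, hp.1.le⟩
  calc ∑ p ∈ N.primesBelow, (p : ℝ)⁻¹
      ≤ ∑ n ∈ Icc 1 N, (n : ℝ)⁻¹ :=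
        sum_le_sum_of_subset_of_nonneg hsub fun _ _ _ => by positivity
    _ = harmonic N := by simp [harmonic_eq_sum_Icc]
    _ ≤ 1 + log N := harmonic_le_one_add_log N

lemma sum_primesBelow_primeWeight_le (N : ℕ) :
    ∑ p ∈ N.primesBelow, primeWeight p ≤ 2 * (1 + log N) := by
  calc ∑ p ∈ N.primesBelow, primeWeight p
      ≤ ∑ p ∈ N.primesBelow, 2 * (p : ℝ)⁻¹ := sum_le_sum fun p hp => by
        simpa [div_eq_mul_inv] using
          primeWeight_le_two_div (Nat.prime_of_mem_primesBelow hp).two_le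
    _ ≤ 2 * (1 + log N) := by
        rw [← mul_sum]
        linarith [sum_primesBelow_inv_le N]

lemma sum_primesBelow_primeWeight_div_le (N : ℕ) :
    ∑ p ∈ N.primesBelow, primeWeight p / p ≤ 69 / 100 := by
  rw [← sum_filter_add_sum_filter_not _ (· < 11)]
  have hsmall : ∑ p ∈ N.primesBelow with p < 11, primeWeight p / p
      ≤ log 2 / 2 + 1 / 6 + 1 / 20 + 1 / 42 := by
    have hsub : {p ∈ N.primesBelow | p < 11} ⊆ {2, 3, 5, 7} := fun p hp => by
      simp only [mem_filter, Nat.mem_primesBelow] at hp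
      have key : ∀ p < 11, p.Prime → p ∈ ({2, 3, 5, 7} : Finset ℕ) := by decide
      exact key p hp.2 hp.1.2
    calc ∑ p ∈ N.primesBelow with p < 11, primeWeight p / p
        ≤ ∑ p ∈ {2, 3, 5, 7}, primeWeight p / p :=
          sum_le_sum_of_subset_of_nonneg hsub fun p hp _ => by
            have : 2 ≤ p := by simp only [mem_insert, mem_singleton] at hp; omega
            have := primeWeight_nonneg this
            positivity
      _ = log 2 / 2 + 1 / 6 + 1 / 20 + 1 / 42 := by norm_num [primeWeight]; ring
  -- for `p ≥ 11` the terms `1 / (p (p - 1)) = 1 / (p - 1) - 1 / p` telescope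
  have hlarge : ∑ p ∈ N.primesBelow with ¬p < 11, primeWeight p / p ≤ 1 / 10 := by
    set f : ℕ → ℝ := fun n => -1 / ((n : ℝ) - 1)
    have hsub : {p ∈ N.primesBelow | ¬p < 11} ⊆ Ico 11 (N + 11) := fun p hp => by
      simp only [mem_filter, Nat.mem_primesBelow] at hp
      exact mem_Ico.mpr ⟨by omega, by omega⟩
    calc ∑ p ∈ N.primesBelow with ¬p < 11, primeWeight p / p
        = ∑ p ∈ N.primesBelow with ¬p < 11, (f (p + 1) - f p) := sum_congr rfl fun p hp => by
          have hp11 : (11 : ℝ) ≤ p := by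
            simp only [mem_filter] at hp; exact_mod_cast not_lt.mp hp.2
          have hp0 : (p : ℝ) ≠ 0 := by linarith
          have hp1 : (p : ℝ) - 1 ≠ 0 := by linarith
          rw [primeWeight, if_neg (by rintro rfl; norm_num at hp11)]
          simp only [f]
          push_cast
          rw [add_sub_cancel_right]
          field_simp
          ring
      _ ≤ ∑ n ∈ Ico 11 (N + 11), (f (n + 1) - f n) :=
          sum_le_sum_of_subset_of_nonneg hsub fun n hn _ => by
            have : (11 : ℝ) ≤ n := by exact_mod_cast (mem_Ico.mp hn).1
            simp only [f]
            push_cast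
            rw [add_sub_cancel_right, sub_nonneg, neg_div, neg_div, neg_le_neg_iff]
            exact one_div_le_one_div_of_le (by linarith) (by linarith)
      _ = f (N + 11) - f 11 := sum_Ico_sub f (by omega)
      _ ≤ 1 / 10 := by
          have hN : f (N + 11) ≤ 0 := div_nonpos_of_nonpos_of_nonneg (by norm_num)
            (by push_cast; linarith [N.cast_nonneg (α := ℝ)])
          have h11 : f 11 = -1 / 10 := by norm_num [f]
          linarith
  linarith [log_two_lt_d9]

lemma Nat.modEq_of_dvd_mul_add {p c d m n : ℕ} (hp : p.Prime) (hcd : c.Coprime d)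
    (hm : p ∣ c * m + d) (hn : p ∣ c * n + d) : m ≡ n [MOD p] := by
  have hpc : Nat.Coprime p c := (Nat.Prime.coprime_iff_not_dvd hp).mpr fun hpc =>
    hp.one_lt.ne' <|
      Nat.eq_one_of_dvd_coprimes hcd hpc ((Nat.dvd_add_right (hpc.mul_right m)).mp hm)
  refine Nat.ModEq.cancel_left_of_coprime hpc (Nat.ModEq.add_right_cancel' d ?_)
  exact (Nat.modEq_zero_iff_dvd.mpr hm).trans (Nat.modEq_zero_iff_dvd.mpr hn).symm

lemma card_le_div_add_one_of_modEq {s : Finset ℕ} {p x : ℕ} (hs : ∀ m ∈ s, m ≤ x)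
    (hmod : ∀ m ∈ s, ∀ n ∈ s, m ≡ n [MOD p]) : #s ≤ x / p + 1 := by
  have hinj : Set.InjOn (· / p) s := fun m hm n hn hdiv => by
    rw [← Nat.div_add_mod m p, ← Nat.div_add_mod n p]
    simp only at hdiv
    rw [hdiv, hmod m hm n hn]
  calc #s ≤ #(range (x / p + 1)) := card_le_card_of_injOn _
        (fun m hm => mem_range.mpr (Nat.lt_succ_of_le (Nat.div_le_div_right (hs m hm)))) hinj
    _ = x / p + 1 := card_range _

lemma card_filter_dvd_mul_add_le {p c d : ℕ} (hp : p.Prime) (hcd : c.Coprime d) (x : ℕ) :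
    #{m ∈ Icc 1 x | p ∣ c * m + d} ≤ x / p + 1 := by
  refine card_le_div_add_one_of_modEq (fun m hm => ?_) fun m hm n hn => ?_
  · exact (mem_Icc.mp (mem_filter.mp hm).1).2
  · exact Nat.modEq_of_dvd_mul_add hp hcd (mem_filter.mp hm).2 (mem_filter.mp hn).2

lemma Nat.Coprime.mul_add_ne_zero {c d m : ℕ} (hcd : c.Coprime d) (hm : m ≠ 0) :
    c * m + d ≠ 0 := by
  intro h
  simp_all

lemma sum_primeFactorWeight_mul_add_le {c d : ℕ} (hcd : c.Coprime d) (x : ℕ) :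
    ∑ m ∈ Icc 1 x, primeFactorWeight (c * m + d)
      ≤ 69 / 100 * x + 2 * (1 + log ((c + d + 1) * x : ℕ)) := by
  set N := (c + d + 1) * x
  have hswap : ∀ m p, m ∈ Icc 1 x ∧ p ∈ (c * m + d).primeFactors ↔
      m ∈ {m ∈ Icc 1 x | p ∣ c * m + d} ∧ p ∈ N.primesBelow := fun m p => by
    simp only [mem_filter, mem_Icc, Nat.mem_primeFactors, Nat.mem_primesBelow]
    constructor
    · rintro ⟨hm, hp, hdvd, hne⟩
      have : p ≤ c * m + d := Nat.le_of_dvd (Nat.pos_of_ne_zero hne) hdvd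
      have : c * m ≤ c * x := Nat.mul_le_mul_left c hm.2
      have : d ≤ d * x := Nat.le_mul_of_pos_right d (by omega)
      exact ⟨⟨hm, hdvd⟩, by simp only [N, add_mul, one_mul]; omega, hp⟩
    · rintro ⟨⟨hm, hdvd⟩, -, hp⟩
      exact ⟨hm, hp, hdvd, hcd.mul_add_ne_zero (by omega)⟩
  calc ∑ m ∈ Icc 1 x, primeFactorWeight (c * m + d)
      = ∑ p ∈ N.primesBelow, #{m ∈ Icc 1 x | p ∣ c * m + d} * primeWeight p := by
        simp only [primeFactorWeight]
        rw [sum_comm' hswap]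
        simp only [sum_const, nsmul_eq_mul]
    _ ≤ ∑ p ∈ N.primesBelow, ((x : ℝ) / p + 1) * primeWeight p := sum_le_sum fun p hp => by
        have hp := Nat.prime_of_mem_primesBelow hp
        gcongr
        · exact primeWeight_nonneg hp.two_le
        · calc (#{m ∈ Icc 1 x | p ∣ c * m + d} : ℝ) ≤ (x / p + 1 : ℕ) := by
                exact_mod_cast card_filter_dvd_mul_add_le hp hcd x
            _ ≤ (x : ℝ) / p + 1 := by push_cast; gcongr; exact Nat.cast_div_le
    _ = x * ∑ p ∈ N.primesBelow, primeWeight p / p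
          + ∑ p ∈ N.primesBelow, primeWeight p := by
        rw [mul_sum, ← sum_add_distrib]
        refine sum_congr rfl fun p _ => ?_
        ring
    _ ≤ 69 / 100 * x + 2 * (1 + log N) := by
        have := mul_le_mul_of_nonneg_left (sum_primesBelow_primeWeight_div_le N) x.cast_nonneg
        linarith [sum_primesBelow_primeWeight_le N]

lemma eventually_add_mul_log_le (a b : ℝ) {ε : ℝ} (hε : 0 < ε) :
    ∀ᶠ x : ℕ in atTop, a + b * log x ≤ ε * x := by
  have h := ((Asymptotics.isLittleO_const_id_atTop a).add
    (isLittleO_log_id_atTop.const_mul_left b)).comp_tendsto tendsto_natCast_atTop_atTop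
  filter_upwards [h.bound hε] with x hx
  simpa using (le_abs_self _).trans hx

lemma eventually_sum_primeFactorWeight_mul_add_le {c d : ℕ} (hcd : c.Coprime d) :
    ∀ᶠ x : ℕ in atTop, ∑ m ∈ Icc 1 x, primeFactorWeight (c * m + d) ≤ 7 / 10 * x := by
  filter_upwards [eventually_add_mul_log_le (2 * (1 + log (c + d + 1))) 2 (ε := 1 / 100)
    (by norm_num), eventually_ge_atTop 1] with x hlog hx
  have hlog_mul : log ((c + d + 1) * x : ℕ) = log (c + d + 1) + log x := by
    push_cast
    exact log_mul (by positivity) (by positivity)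
  linarith [sum_primeFactorWeight_mul_add_le hcd x]

lemma card_sub_le_card_filter_lt {ι : Type*} (s : Finset ι) {f : ι → ℝ}
    (hf : ∀ i ∈ s, 0 ≤ f i) {K B : ℝ} (hK : 0 < K) (hsum : ∑ i ∈ s, f i ≤ K * B) :
    (#s : ℝ) - B ≤ #{i ∈ s | f i < K} := by
  classical
  have hmarkov : #{i ∈ s | ¬f i < K} * K ≤ B * K := calc
    #{i ∈ s | ¬f i < K} * K ≤ ∑ i ∈ s with ¬f i < K, f i := by
      simpa using card_nsmul_le_sum _ f K fun i hi => not_lt.mp (mem_filter.mp hi).2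
    _ ≤ ∑ i ∈ s, f i :=
      sum_le_sum_of_subset_of_nonneg (filter_subset _ _) fun i hi _ => hf i hi
    _ ≤ B * K := hsum.trans_eq (mul_comm K B)
  have hbad := le_of_mul_le_mul_right hmarkov hK
  rw [← card_filter_add_card_filter_not (s := s) (f · < K)]
  push_cast
  linarith

open scoped Classical in
lemma le_lowerDensity_of_eventually {S : Set ℕ} {a : ℝ}
    (h : ∀ᶠ x : ℕ in atTop, a * x ≤ #{n ∈ Icc 1 x | n ∈ S}) : a ≤ lowerDensity S := by
  have hbdd : IsCoboundedUnder (· ≥ ·) atTop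
      fun x : ℕ => (#{n ∈ Icc 1 x | n ∈ S} : ℝ) / x := by
    refine IsBoundedUnder.isCoboundedUnder_flip <|
      isBoundedUnder_of ⟨1, fun x => div_le_one_of_le₀ ?_ x.cast_nonneg⟩
    exact_mod_cast (card_filter_le _ _).trans (by simp)
  refine le_liminf_of_le hbdd ?_
  filter_upwards [h, eventually_ge_atTop 1] with x hx hx1
  exact (le_div_iff₀ (by exact_mod_cast hx1)).mpr hx

lemma eventually_sum_sum_primeFactorWeight_le {k : ℕ} {c d : ℕ → ℕ}
    (hcd : ∀ j < k, (c j).Coprime (d j)) :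
    ∀ᶠ x : ℕ in atTop, ∑ m ∈ Icc 1 x, ∑ j ∈ range k, primeFactorWeight (c j * m + d j)
      ≤ k * (7 / 10 * x) := by
  filter_upwards [(range k).eventually_all.mpr fun j hj =>
    eventually_sum_primeFactorWeight_mul_add_le (hcd j (mem_range.mp hj))] with x hx
  rw [sum_comm]
  simpa using sum_le_sum hx

theorem totient_ratio_large_often_general
    (k : ℕ) (hk : 0 < k) (c d : ℕ → ℕ)
    (hcd : ∀ j, j < k → Nat.Coprime (c j) (d j)) :
    (3 : ℝ) / 10 ≤ lowerDensity {m : ℕ | 0 < m ∧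
      ∀ j, j < k →
        ((Nat.totient (c j * m + d j) : ℝ) / (c j * m + d j) > Real.exp (-(k : ℝ)))} := by
  set W : ℕ → ℝ := fun m => ∑ j ∈ range k, primeFactorWeight (c j * m + d j)
  refine le_lowerDensity_of_eventually ?_
  filter_upwards [eventually_sum_sum_primeFactorWeight_le hcd] with x hx
  calc 3 / 10 * (x : ℝ) = #(Icc 1 x) - 7 / 10 * x := by
        rw [Nat.card_Icc, Nat.add_sub_cancel]; ring
    _ ≤ #{m ∈ Icc 1 x | W m < k} := card_sub_le_card_filter_lt _
        (fun m _ => sum_nonneg fun j _ => primeFactorWeight_nonneg _) (by exact_mod_cast hk) hx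
    _ ≤ _ := by
        refine mod_cast card_le_card fun m hm => ?_
        obtain ⟨hm, hWm⟩ := mem_filter.mp hm
        refine mem_filter.mpr ⟨hm, (mem_Icc.mp hm).1, fun j hj => ?_⟩
        have hn := (hcd j hj).mul_add_ne_zero (m := m) (by grind)
        have hWj : primeFactorWeight (c j * m + d j) ≤ W m :=
          single_le_sum (f := fun i => primeFactorWeight (c i * m + d i))
            (fun i _ => primeFactorWeight_nonneg _) (mem_range.mpr hj)
        exact_mod_cast exp_neg_lt_totient_div_of_primeFactorWeight_lt hn (hWj.trans_lt hWm)

theorem totient_ratio_large_often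
    (k : ℕ) (hk : 0 < k) (c d : ℕ → ℕ)
    (hc : ∀ j, j < k → 0 < c j) (hd : ∀ j, j < k → 0 < d j)
    (hcd : ∀ j, j < k → Nat.Coprime (c j) (d j)) :
    (3 : ℝ) / 10 ≤ lowerDensity {m : ℕ | 0 < m ∧
      ∀ j, j < k →
        ((Nat.totient (c j * m + d j) : ℝ) / (c j * m + d j) > Real.exp (-(k : ℝ)))} :=
  totient_ratio_large_often_general k hk c d hcd
end
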